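/- Fix a bidder i in a finite set I, a valuation v ∈ ℝ, and η ∈ [0,1). For each j ∈ I with j ≠ i, let F̃_j : ℝ → ℝ and φ̃_j : ℝ → ℝ be such that φ̃_j is differentiable at a point b̃ ∈ ℝ, F̃_j is differentiable at φ̃_j(b̃) with derivative f̃_j(φ̃_j(b̃)), and F̃_j(φ̃_j(b̃)) > 0. Suppose b̃ < v and b̃ is a local maximum of the function b' ↦ (v − b')^(1−η) · ∏_{j∈I, j≠i} F̃_j(φ̃_j(b')). Then (1 − η)/(v − b̃) = ∑_{j∈I, j≠i} f̃_j(φ̃_j(b̃)) · φ̃_j'(b̃) / F̃_j(φ̃_j(b̃)). -/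

import Mathlib

open Finset

/-- First-order condition at a local maximum of the associated-auction objective for
a CRRA bidder with valuation `v` facing opponents with valuation distributions
`F̃ j` and inverse strategies `φ̃ j`. -/
theorem stmt_17 {ι : Type*} [DecidableEq ι] (I : Finset ι) (i : ι) (hi : i ∈ I)
    (v η : ℝ) (hη0 : 0 ≤ η) (hη1 : η < 1)
    (Ft φt : ι → ℝ → ℝ) (ft dφ : ι → ℝ → ℝ) (bt : ℝ)
    (hφ : ∀ j ∈ I.erase i, HasDerivAt (φt j) (dφ j bt) bt)
    (hF : ∀ j ∈ I.erase i, HasDerivAt (Ft j) (ft j (φt j bt)) (φt j bt))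
    (hFpos : ∀ j ∈ I.erase i, 0 < Ft j (φt j bt))
    (hbt : bt < v)
    (hmax : IsLocalMax
      (fun b' : ℝ => (v - b') ^ (1 - η) * ∏ j ∈ I.erase i, Ft j (φt j b')) bt) :
    (1 - η) / (v - bt) =
      ∑ j ∈ I.erase i, ft j (φt j bt) * dφ j bt / Ft j (φt j bt) := by
  set g : ℝ → ℝ := fun b' : ℝ => (v - b') ^ (1 - η) * ∏ j ∈ I.erase i, Ft j (φt j b')
  set h : ℝ → ℝ := fun b' : ℝ =>
    (1 - η) * Real.log (v - b') + ∑ j ∈ I.erase i, Real.log (Ft j (φt j b'))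
  have hvbt : 0 < v - bt := by linarith
  -- eventually positivity
  have hev : ∀ᶠ b in nhds bt, (0 < v - b) ∧ ∀ j ∈ I.erase i, 0 < Ft j (φt j b) := by
    have h1 : ∀ᶠ b in nhds bt, 0 < v - b := by
      have : ContinuousAt (fun b : ℝ => v - b) bt := by fun_prop
      exact this.eventually_const_lt hvbt
    have h2 : ∀ᶠ b in nhds bt, ∀ j ∈ I.erase i, 0 < Ft j (φt j b) := by
      rw [Filter.eventually_all_finset]
      intro j hj
      have hc : ContinuousAt (fun b => Ft j (φt j b)) bt :=
        ((hF j hj).continuousAt).comp ((hφ j hj).continuousAt)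
      exact hc.eventually_const_lt (hFpos j hj)
    exact h1.and h2
  -- eventually log g = h and g > 0
  have heq : ∀ᶠ b in nhds bt, Real.log (g b) = h b ∧ 0 < g b := by
    filter_upwards [hev] with b hb
    obtain ⟨hvb, hFb⟩ := hb
    have hprod : 0 < ∏ j ∈ I.erase i, Ft j (φt j b) := Finset.prod_pos hFb
    constructor
    · show Real.log _ = _
      rw [Real.log_mul (by positivity) (ne_of_gt hprod), Real.log_rpow hvb,
        Real.log_prod (fun j hj => ne_of_gt (hFb j hj))]
    · positivity
  -- h has local max at bt
  have hmaxh : IsLocalMax h bt := by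
    have hgt : Real.log (g bt) = h bt ∧ 0 < g bt := heq.self_of_nhds
    filter_upwards [hmax, heq] with b hb hbeq
    calc h b = Real.log (g b) := hbeq.1.symm
      _ ≤ Real.log (g bt) := Real.log_le_log hbeq.2 hb
      _ = h bt := hgt.1
  -- derivative of h
  set S : ℝ := ∑ j ∈ I.erase i, ft j (φt j bt) * dφ j bt / Ft j (φt j bt)
  have hd : HasDerivAt h ((1 - η) * (-1 / (v - bt)) + S) bt := by
    have hd1 : HasDerivAt (fun b : ℝ => (1 - η) * Real.log (v - b))
        ((1 - η) * (-1 / (v - bt))) bt := by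
      have : HasDerivAt (fun b : ℝ => v - b) (-1) bt := by
        simpa using (hasDerivAt_id bt).const_sub v
      exact (this.log (ne_of_gt hvbt)).const_mul _
    have hd2 : HasDerivAt (fun b : ℝ => ∑ j ∈ I.erase i, Real.log (Ft j (φt j b))) S bt := by
      apply HasDerivAt.fun_sum
      intro j hj
      have hcomp : HasDerivAt (fun b => Ft j (φt j b))
          (ft j (φt j bt) * dφ j bt) bt := (hF j hj).comp bt (hφ j hj)
      simpa [div_eq_mul_inv, mul_comm] using hcomp.log (ne_of_gt (hFpos j hj))
    exact hd1.add hd2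
  have hzero : (1 - η) * (-1 / (v - bt)) + S = 0 := hmaxh.hasDerivAt_eq_zero hd
  have : (1 - η) / (v - bt) = S := by
    field_simp at hzero ⊢
    linarith
  exact this
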